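/- arXiv:2006.05130 — 3 statements merged into one kernel-verified Lean document; each statement's English description precedes it below -/
import Mathlib

section
/- Let b > 0, let p ≥ 2 be an even integer, let s > 0, and let X be a random variable with P(0 ≤ X ≤ b) = 1. Then m_{X,s}(p+1) ≥ m_{X,s}(p+2), where m_{X,s}(q) := (E[max(X^q, 0)] / b^q) · T_{q+1}(sb) + E[∑_{j=0}^{q−1} s^j X^j / j!]. -/
open Real Finset MeasureTheory

/-- `T p x = exp x - ∑_{j=0}^{p-2} x^j / j!`, the Taylor remainder of the exponential
function of order `p - 2` at `0` (empty sum convention gives `T 1 x = exp x`). -/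
noncomputable def T (p : ℕ) (x : ℝ) : ℝ :=
  Real.exp x - ∑ j ∈ Finset.range (p - 1), x ^ j / (j.factorial : ℝ)

/-- `m X s b q = (E[max(X^q,0)] / b^q) * T_{q+1}(s b) + E[∑_{j=0}^{q-1} s^j X^j / j!]`. -/
noncomputable def m {Ω : Type*} [MeasurableSpace Ω] (P : Measure Ω) (X : Ω → ℝ) (s b : ℝ)
    (q : ℕ) : ℝ :=
  (∫ ω, max ((X ω) ^ q) 0 ∂P) / b ^ q * T (q + 1) (s * b)
    + ∫ ω, ∑ j ∈ Finset.range q, s ^ j * (X ω) ^ j / (j.factorial : ℝ) ∂P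

/-!
Write `μ_j = E[X^j]`. Since `X ≥ 0` the maximum in `m` is harmless, and peeling the term
`(sb)^q / q!` off `T_{q+1}(sb)` turns it into the `j = q` term of the polynomial part, so
`m(q) = μ_q / b^q · T_{q+2}(sb) + ∑_{j ≤ q} s^j μ_j / j!` while
`m(q+1) = μ_{q+1} / b^{q+1} · T_{q+2}(sb) + ∑_{j ≤ q} s^j μ_j / j!`.
As `X ≤ b`, the normalized moments `μ_q / b^q` decrease, and `T_{q+2}(sb) ≥ 0` for `sb ≥ 0`,
so `m(q+1) ≤ m(q)` for every `q`.
-/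

open ProbabilityTheory
open scoped Nat

lemma T_eq_T_add_pow_div_factorial (n : ℕ) (x : ℝ) :
    T (n + 1) x = T (n + 2) x + x ^ n / n ! := by
  simp only [T, Nat.add_sub_cancel, show n + 2 - 1 = n + 1 from rfl, sum_range_succ]
  ring

lemma T_nonneg {x : ℝ} (hx : 0 ≤ x) (n : ℕ) : 0 ≤ T n x :=
  sub_nonneg.2 (sum_le_exp_of_nonneg hx _)

section BoundedRandomVariable

variable {Ω : Type*} [MeasurableSpace Ω] {P : Measure Ω} {X : Ω → ℝ} {b : ℝ}

lemma integrable_pow_of_ae_mem_Icc [IsFiniteMeasure P] (hX : AEStronglyMeasurable X P)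
    (hXb : ∀ᵐ ω ∂P, X ω ∈ Set.Icc 0 b) (j : ℕ) : Integrable (fun ω ↦ X ω ^ j) P := by
  refine (integrable_const (b ^ j)).mono' (hX.pow j) ?_
  filter_upwards [hXb] with ω hω
  rw [norm_pow, norm_of_nonneg hω.1]
  exact pow_le_pow_left₀ hω.1 hω.2 j

lemma moment_succ_le_mul_moment [IsFiniteMeasure P] (hX : AEStronglyMeasurable X P)
    (hXb : ∀ᵐ ω ∂P, X ω ∈ Set.Icc 0 b) (q : ℕ) :
    moment X (q + 1) P ≤ b * moment X q P := by
  simp only [moment, Pi.pow_apply, ← integral_const_mul]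
  refine integral_mono_ae (integrable_pow_of_ae_mem_Icc hX hXb _)
    ((integrable_pow_of_ae_mem_Icc hX hXb _).const_mul b) ?_
  filter_upwards [hXb] with ω hω
  rw [pow_succ']
  exact mul_le_mul_of_nonneg_right hω.2 (pow_nonneg hω.1 q)

lemma moment_succ_div_pow_le [IsFiniteMeasure P] (hb : 0 < b) (hX : AEStronglyMeasurable X P)
    (hXb : ∀ᵐ ω ∂P, X ω ∈ Set.Icc 0 b) (q : ℕ) :
    moment X (q + 1) P / b ^ (q + 1) ≤ moment X q P / b ^ q := by
  rw [div_le_div_iff₀ (by positivity) (by positivity)]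
  calc moment X (q + 1) P * b ^ q ≤ b * moment X q P * b ^ q := by
        gcongr
        exact moment_succ_le_mul_moment hX hXb q
    _ = moment X q P * b ^ (q + 1) := by ring

lemma m_eq_moment [IsFiniteMeasure P] (hX : AEStronglyMeasurable X P)
    (hXb : ∀ᵐ ω ∂P, X ω ∈ Set.Icc 0 b) (s : ℝ) (q : ℕ) :
    m P X s b q = moment X q P / b ^ q * T (q + 1) (s * b)
      + ∑ j ∈ range q, s ^ j * moment X j P / j ! := by
  have hmax : ∫ ω, max (X ω ^ q) 0 ∂P = moment X q P := by
    refine integral_congr_ae ?_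
    filter_upwards [hXb] with ω hω
    exact max_eq_left (pow_nonneg hω.1 q)
  have hsum : ∫ ω, ∑ j ∈ range q, s ^ j * X ω ^ j / (j ! : ℝ) ∂P
      = ∑ j ∈ range q, s ^ j * moment X j P / j ! := by
    rw [integral_finsetSum _
      fun j _ ↦ ((integrable_pow_of_ae_mem_Icc hX hXb j).const_mul _).div_const _]
    simp only [integral_div, integral_const_mul, moment, Pi.pow_apply]
  rw [m, hmax, hsum]

lemma m_eq_moment_of_succ [IsFiniteMeasure P] (hb : b ≠ 0) (hX : AEStronglyMeasurable X P)
    (hXb : ∀ᵐ ω ∂P, X ω ∈ Set.Icc 0 b) (s : ℝ) (q : ℕ) :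
    m P X s b q = moment X q P / b ^ q * T (q + 2) (s * b)
      + ∑ j ∈ range (q + 1), s ^ j * moment X j P / j ! := by
  rw [m_eq_moment hX hXb, T_eq_T_add_pow_div_factorial, sum_range_succ, mul_pow]
  field_simp
  ring

lemma m_succ_le [IsFiniteMeasure P] (hb : 0 < b) (hX : AEStronglyMeasurable X P)
    (hXb : ∀ᵐ ω ∂P, X ω ∈ Set.Icc 0 b) {s : ℝ} (hs : 0 ≤ s) (q : ℕ) :
    m P X s b (q + 1) ≤ m P X s b q := by
  rw [m_eq_moment hX hXb, m_eq_moment_of_succ hb.ne' hX hXb]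
  gcongr ?_ + _
  exact mul_le_mul_of_nonneg_right (moment_succ_div_pow_le hb hX hXb q)
    (T_nonneg (by positivity) _)

end BoundedRandomVariable

theorem statement3_general {Ω : Type*} [MeasurableSpace Ω] (P : Measure Ω) [IsProbabilityMeasure P]
    (b : ℝ) (hb : 0 < b) (p : ℕ)
    (s : ℝ) (hs : 0 < s)
    (X : Ω → ℝ) (hX : Measurable X)
    (hXb : P {ω | X ω ∈ Set.Icc 0 b} = 1) :
    m P X s b (p + 2) ≤ m P X s b (p + 1) := by
  have hXb_ae : ∀ᵐ ω ∂P, X ω ∈ Set.Icc 0 b := by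
    rw [ae_iff_measure_eq (hX measurableSet_Icc).nullMeasurableSet, hXb, measure_univ]
  exact m_succ_le hb hX.aestronglyMeasurable hXb_ae hs.le (p + 1)

theorem statement3 {Ω : Type*} [MeasurableSpace Ω] (P : Measure Ω) [IsProbabilityMeasure P]
    (b : ℝ) (hb : 0 < b) (p : ℕ) (hp : 2 ≤ p) (hpeven : Even p)
    (s : ℝ) (hs : 0 < s)
    (X : Ω → ℝ) (hX : Measurable X)
    (hXb : P {ω | X ω ∈ Set.Icc 0 b} = 1) :
    m P X s b (p + 2) ≤ m P X s b (p + 1) :=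
  statement3_general P b hb p s hs X hX hXb
end

section
/- Let p be a positive integer. Then the function g(x) := T_{p+1}(x)/x^p is increasing on (0, ∞); that is, for all 0 < x ≤ y one has T_{p+1}(x)/x^p ≤ T_{p+1}(y)/y^p. -/
open Real Finset

/-!
Dividing the tail `T (p + 1) x = ∑ₙ x ^ (n + p) / (n + p)!` of the exponential series by `x ^ p`
gives the power series `∑ₙ x ^ n / (n + p)!`, whose coefficients are all positive; such a series
is monotone on `[0, ∞)` term by term.
-/

lemma summable_pow_div_factorial_add (p : ℕ) (x : ℝ) :
    Summable fun n : ℕ => x ^ n / ((n + p).factorial : ℝ) := by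
  refine (Real.summable_pow_div_factorial |x|).of_norm_bounded fun n => ?_
  rw [norm_div, norm_pow, Real.norm_eq_abs, RCLike.norm_natCast]
  gcongr
  omega

lemma T_succ_eq_tsum (p : ℕ) (x : ℝ) :
    T (p + 1) x = ∑' n : ℕ, x ^ (n + p) / ((n + p).factorial : ℝ) := by
  have h := (Real.summable_pow_div_factorial x).sum_add_tsum_nat_add p
  rw [T, Real.exp_eq_exp_ℝ, NormedSpace.exp_eq_tsum_div, Nat.add_sub_cancel]
  exact sub_eq_of_eq_add' h.symm

lemma T_succ_div_pow_eq_tsum (p : ℕ) {x : ℝ} (hx : x ≠ 0) :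
    T (p + 1) x / x ^ p = ∑' n : ℕ, x ^ n / ((n + p).factorial : ℝ) := by
  rw [T_succ_eq_tsum, ← tsum_div_const]
  congr 1 with n
  field_simp
  ring

lemma monotoneOn_tsum_pow_div_factorial_add (p : ℕ) :
    MonotoneOn (fun x : ℝ => ∑' n : ℕ, x ^ n / ((n + p).factorial : ℝ)) (Set.Ici 0) :=
  fun x hx y _ hxy =>
    (summable_pow_div_factorial_add p x).tsum_le_tsum
      (fun n => by gcongr) (summable_pow_div_factorial_add p y)

theorem statement18_general (p : ℕ) :
    ∀ x y : ℝ, 0 < x → x ≤ y → T (p + 1) x / x ^ p ≤ T (p + 1) y / y ^ p := by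
  intro x y hx hxy
  rw [T_succ_div_pow_eq_tsum p hx.ne', T_succ_div_pow_eq_tsum p (hx.trans_le hxy).ne']
  exact monotoneOn_tsum_pow_div_factorial_add p (Set.mem_Ici.mpr hx.le)
    (Set.mem_Ici.mpr (hx.le.trans hxy)) hxy

theorem statement18 (p : ℕ) (hp : 1 ≤ p) :
    ∀ x y : ℝ, 0 < x → x ≤ y → T (p + 1) x / x ^ p ≤ T (p + 1) y / y ^ p :=
  statement18_general p
end

section
/- Let p ≥ 1 be an integer, b > 0, and let X be a random variable with P(X ∈ [0, b]) = 1 and P(X > 0) > 0. Set μ^k := E[X^k] for k = 1, …, p. Then for every s ≥ 0: E[exp(s(X − E[X]))] ≤ exp( s^2 b^2 · C_p(sb, b, μ^1, …, μ^p) / 8 ). -/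
/-!
Write `ψ t = log E[e^{tX}]`. Then `ψ 0 = 0`, `ψ' 0 = E X`, and `ψ'' t = E_t[X²] - E_t[X]²` is the
variance of `X` under the law tilted by `e^{tX}`, so it suffices to bound it by `b² C_p / 4` on
`[0, s]`. If `E_t[X²] ≤ R E_t[X]`, that variance is at most `R E_t[X] - E_t[X]² ≤ R² / 4`. By
Chebyshev's correlation inequality for the tilted law, `E[X² e^{tX}] / E[X e^{tX}]` increases with
`t`, so `R` may be taken at `t = s`. Expanding `e^{sX}` in moments, this ratio only grows when the
moments `μ^i`, `i > p`, are replaced by `b^{i-p} μ^p`: these dominate them, and their excess over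
the true moments grows at least by the factor `b` from `i` to `i + 1`. For the modified sequence
the ratio `R` at `t = s` satisfies `(R / b)² = C_p(sb, b, μ)` exactly.
-/

open Real Finset MeasureTheory

/-- `Cp p y b μ`, where `μ k` stands for the `k`-th moment `μ^k`. -/
noncomputable def Cp (p : ℕ) (y b : ℝ) (μ : ℕ → ℝ) : ℝ :=
  ((μ p * Real.exp y
      + ∑ j ∈ Finset.range (p - 2), y ^ j / (j.factorial : ℝ) * (b ^ (p - j - 2) * μ (j + 2) - μ p)) /
   (μ p * Real.exp y
      + ∑ j ∈ Finset.range (p - 1), y ^ j / (j.factorial : ℝ) * (b ^ (p - j - 1) * μ (j + 1) - μ p))) ^ 2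

open ProbabilityTheory

noncomputable def egf (s : ℝ) (m : ℕ → ℝ) (k : ℕ) : ℝ :=
  ∑' j, s ^ j / j.factorial * m (j + k)

def extendGeom (p : ℕ) (b : ℝ) (m : ℕ → ℝ) (i : ℕ) : ℝ :=
  b ^ (i - p) * m (min i p)

lemma hasSum_pow_div_factorial (y : ℝ) : HasSum (fun j ↦ y ^ j / j.factorial) (exp y) := by
  rw [exp_eq_exp_ℝ]
  exact NormedSpace.expSeries_div_hasSum_exp y

lemma mul_exp_add_sum_eq_tsum (y g : ℝ) (n : ℕ) (c : ℕ → ℝ) (hc : ∀ j, n ≤ j → c j = g) :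
    g * exp y + ∑ j ∈ range n, y ^ j / j.factorial * (c j - g)
      = ∑' j, y ^ j / j.factorial * c j := by
  have hfin : HasSum (fun j ↦ y ^ j / j.factorial * (c j - g))
      (∑ j ∈ range n, y ^ j / j.factorial * (c j - g)) :=
    hasSum_sum_of_ne_finset_zero fun j hj ↦ by simp [hc j (by simpa using hj)]
  have hsplit : (fun j ↦ y ^ j / j.factorial * c j)
      = fun j ↦ g * (y ^ j / j.factorial) + y ^ j / j.factorial * (c j - g) := by
    funext j
    ring
  rw [hsplit, (((hasSum_pow_div_factorial y).mul_left g).add hfin).tsum_eq]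

lemma pow_mul_exp_add_sum_eq_egf_extendGeom {p k : ℕ} (hp : 1 ≤ p) (hk : 1 ≤ k) (s b : ℝ)
    (m : ℕ → ℝ) :
    b ^ (k - 1) * (m p * exp (s * b) + ∑ j ∈ range (p - k),
        (s * b) ^ j / j.factorial * (b ^ (p - j - k) * m (j + k) - m p))
      = b ^ (p - 1) * egf s (extendGeom p b m) k := by
  -- beyond `p - k` the coefficients `c j` are constantly `m p`, matching the `m p * exp` term
  set c : ℕ → ℝ := fun j ↦ b ^ (p - j - k) * m (min (j + k) p)
  have hsum : ∑ j ∈ range (p - k), (s * b) ^ j / j.factorial * (b ^ (p - j - k) * m (j + k) - m p)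
      = ∑ j ∈ range (p - k), (s * b) ^ j / j.factorial * (c j - m p) :=
    sum_congr rfl fun j hj ↦ by
      rw [mem_range] at hj
      simp only [c, min_eq_left (by omega : j + k ≤ p)]
  rw [hsum, mul_exp_add_sum_eq_tsum _ _ _ c fun j hj ↦ by
      simp [c, show p - j - k = 0 by omega, min_eq_right (by omega : p ≤ j + k)],
    egf, ← tsum_mul_left, ← tsum_mul_left]
  congr 1
  funext j
  have hexp : k - 1 + j + (p - j - k) = p - 1 + (j + k - p) := by omega
  calc b ^ (k - 1) * ((s * b) ^ j / j.factorial * c j)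
      = s ^ j / j.factorial * b ^ (k - 1 + j + (p - j - k)) * m (min (j + k) p) := by
        simp only [c, mul_pow, pow_add]; ring
    _ = b ^ (p - 1) * (s ^ j / j.factorial * extendGeom p b m (j + k)) := by
        rw [hexp, extendGeom, pow_add]; ring

lemma Cp_eq_sq_egf_div {p : ℕ} (hp : 1 ≤ p) (s : ℝ) {b : ℝ} (hb : b ≠ 0) (m : ℕ → ℝ) :
    Cp p (s * b) b m
      = (egf s (extendGeom p b m) 2 / (b * egf s (extendGeom p b m) 1)) ^ 2 := by
  have hD := pow_mul_exp_add_sum_eq_egf_extendGeom hp le_rfl s b m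
  have hN := pow_mul_exp_add_sum_eq_egf_extendGeom hp one_le_two s b m
  rw [Nat.sub_self, pow_zero, one_mul] at hD
  rw [show 2 - 1 = 1 from rfl, pow_one, mul_comm] at hN
  rw [Cp, hD, eq_div_of_mul_eq hb hN, div_div, mul_left_comm b,
    mul_div_mul_left _ _ (pow_ne_zero (p - 1) hb)]

lemma summable_pow_div_factorial_mul_pow (x b : ℝ) (k : ℕ) :
    Summable fun j ↦ x ^ j / j.factorial * b ^ (j + k) := by
  refine ((summable_pow_div_factorial (x * b)).mul_left (b ^ k)).congr fun j ↦ ?_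
  rw [mul_pow, pow_add]
  ring

section MomentSequence

variable {m : ℕ → ℝ} {b : ℝ}

lemma le_pow_mul_of_forall_succ_le (hb : 0 ≤ b) (hmb : ∀ i, m (i + 1) ≤ b * m i) (i n : ℕ) :
    m (i + n) ≤ b ^ n * m i := by
  induction n with
  | zero => simp
  | succ n ih =>
    calc m (i + n + 1) ≤ b * m (i + n) := hmb _
      _ ≤ b * (b ^ n * m i) := mul_le_mul_of_nonneg_left ih hb
      _ = b ^ (n + 1) * m i := by ring

lemma summable_egf (hb : 0 ≤ b) (hm0 : ∀ i, 0 ≤ m i) (hmb : ∀ i, m (i + 1) ≤ b * m i)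
    (s : ℝ) (k : ℕ) : Summable fun j ↦ s ^ j / j.factorial * m (j + k) := by
  refine .of_norm_bounded ((summable_pow_div_factorial_mul_pow |s| b k).mul_left (m 0)) fun j ↦ ?_
  have hm := le_pow_mul_of_forall_succ_le hb hmb 0 (j + k)
  rw [zero_add] at hm
  simp only [norm_mul, norm_div, norm_pow, Real.norm_eq_abs, Nat.abs_cast, abs_of_nonneg (hm0 _)]
  rw [mul_left_comm]
  gcongr
  linarith

variable (p : ℕ)

lemma extendGeom_of_le {i : ℕ} (hi : i ≤ p) : extendGeom p b m i = m i := by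
  simp [extendGeom, hi, Nat.sub_eq_zero_of_le]

lemma extendGeom_succ_of_le {i : ℕ} (hi : p ≤ i) :
    extendGeom p b m (i + 1) = b * extendGeom p b m i := by
  simp only [extendGeom, min_eq_right hi, min_eq_right (hi.trans i.le_succ),
    Nat.sub_add_comm hi, pow_succ]
  ring

lemma extendGeom_nonneg (hb : 0 ≤ b) (hm0 : ∀ i, 0 ≤ m i) (i : ℕ) : 0 ≤ extendGeom p b m i :=
  mul_nonneg (pow_nonneg hb _) (hm0 _)

lemma extendGeom_succ_le (hmb : ∀ i, m (i + 1) ≤ b * m i) (i : ℕ) :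
    extendGeom p b m (i + 1) ≤ b * extendGeom p b m i := by
  rcases lt_or_ge i p with hi | hi
  · rw [extendGeom_of_le p hi, extendGeom_of_le p hi.le]
    exact hmb i
  · exact (extendGeom_succ_of_le p hi).le

lemma le_extendGeom (hb : 0 ≤ b) (hmb : ∀ i, m (i + 1) ≤ b * m i) (i : ℕ) :
    m i ≤ extendGeom p b m i := by
  rcases le_or_gt i p with hi | hi
  · rw [extendGeom_of_le p hi]
  · obtain ⟨n, rfl⟩ := Nat.exists_eq_add_of_le hi.le
    simpa [extendGeom] using le_pow_mul_of_forall_succ_le hb hmb p n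

lemma mul_sub_le_extendGeom_succ_sub (hmb : ∀ i, m (i + 1) ≤ b * m i) (i : ℕ) :
    b * (extendGeom p b m i - m i) ≤ extendGeom p b m (i + 1) - m (i + 1) := by
  rcases lt_or_ge i p with hi | hi
  · rw [extendGeom_of_le p hi, extendGeom_of_le p hi.le]
    simp
  · rw [extendGeom_succ_of_le p hi]
    linarith [hmb i]

variable {s : ℝ}

lemma egf_le_egf_extendGeom (hb : 0 ≤ b) (hs : 0 ≤ s) (hm0 : ∀ i, 0 ≤ m i)
    (hmb : ∀ i, m (i + 1) ≤ b * m i) (k : ℕ) : egf s m k ≤ egf s (extendGeom p b m) k :=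
  (summable_egf hb hm0 hmb s k).tsum_le_tsum
    (fun j ↦ mul_le_mul_of_nonneg_left (le_extendGeom p hb hmb _) (by positivity))
    (summable_egf hb (extendGeom_nonneg p hb hm0) (extendGeom_succ_le p hmb) s k)

lemma egf_two_mul_egf_extendGeom_le (hb : 0 ≤ b) (hs : 0 ≤ s) (hm0 : ∀ i, 0 ≤ m i)
    (hmb : ∀ i, m (i + 1) ≤ b * m i) :
    egf s m 2 * egf s (extendGeom p b m) 1 ≤ egf s m 1 * egf s (extendGeom p b m) 2 := by
  have hm := summable_egf hb hm0 hmb s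
  have hm' := summable_egf hb (extendGeom_nonneg p hb hm0) (extendGeom_succ_le p hmb) s
  have hw : ∀ j : ℕ, 0 ≤ s ^ j / j.factorial := fun j ↦ by positivity
  have hE1 : 0 ≤ egf s m 1 := tsum_nonneg fun j ↦ mul_nonneg (hw j) (hm0 _)
  have hE2 : egf s m 2 ≤ b * egf s m 1 := by
    rw [egf, egf, ← tsum_mul_left]
    refine (hm 2).tsum_le_tsum (fun j ↦ ?_) ((hm 1).mul_left b)
    rw [mul_left_comm]
    exact mul_le_mul_of_nonneg_left (hmb (j + 1)) (hw j)
  have hT (k : ℕ) : egf s (extendGeom p b m) k - egf s m k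
      = ∑' j, (s ^ j / j.factorial * extendGeom p b m (j + k) - s ^ j / j.factorial * m (j + k)) :=
    ((hm' k).tsum_sub (hm k)).symm
  have hT1 : 0 ≤ egf s (extendGeom p b m) 1 - egf s m 1 :=
    sub_nonneg.2 (egf_le_egf_extendGeom p hb hs hm0 hmb 1)
  have hT2 : b * (egf s (extendGeom p b m) 1 - egf s m 1)
      ≤ egf s (extendGeom p b m) 2 - egf s m 2 := by
    rw [hT, hT, ← tsum_mul_left]
    refine Summable.tsum_le_tsum (fun j ↦ ?_) (((hm' 1).sub (hm 1)).mul_left b) ((hm' 2).sub (hm 2))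
    rw [← mul_sub, ← mul_sub, mul_left_comm]
    exact mul_le_mul_of_nonneg_left (mul_sub_le_extendGeom_succ_sub p hmb (j + 1)) (hw j)
  linarith [mul_le_mul_of_nonneg_right hE2 hT1, mul_le_mul_of_nonneg_left hT2 hE1]

end MomentSequence

lemma le_of_hasDerivAt_nonpos_on_Icc {φ φ' : ℝ → ℝ} {s t : ℝ} (hφ : ∀ t, HasDerivAt φ (φ' t) t)
    (hφ' : ∀ t ∈ Set.Icc 0 s, φ' t ≤ 0) (ht : t ∈ Set.Icc 0 s) : φ t ≤ φ 0 :=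
  antitoneOn_of_hasDerivWithinAt_nonpos (convex_Icc 0 s)
    (HasDerivAt.continuousOn fun t _ ↦ hφ t) (fun t _ ↦ (hφ t).hasDerivWithinAt)
    (fun t ht ↦ hφ' t (interior_subset ht)) ⟨le_rfl, ht.1.trans ht.2⟩ ht ht.1

lemma le_add_mul_add_of_second_deriv_le {f f' f'' : ℝ → ℝ} {s C : ℝ} (hs : 0 ≤ s)
    (hf : ∀ t, HasDerivAt f (f' t) t) (hf' : ∀ t, HasDerivAt f' (f'' t) t)
    (hC : ∀ t ∈ Set.Icc 0 s, f'' t ≤ C) : f s ≤ f 0 + f' 0 * s + C * s ^ 2 / 2 := by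
  have hd' (t : ℝ) : HasDerivAt (fun u ↦ f' u - C * u) (f'' t - C) t := by
    simpa using (hf' t).fun_sub ((hasDerivAt_id t).const_mul C)
  have hd (t : ℝ) :
      HasDerivAt (fun u ↦ f u - f' 0 * u - C * u ^ 2 / 2) (f' t - f' 0 - C * t) t := by
    refine (((hf t).fun_sub ((hasDerivAt_id t).const_mul _)).fun_sub
      (((hasDerivAt_pow 2 t).const_mul C).div_const 2)).congr_deriv ?_
    simp only [mul_one, Nat.cast_ofNat, Nat.add_one_sub_one, pow_one, sub_right_inj]
    ring
  have hd_nonpos (t : ℝ) (ht : t ∈ Set.Icc 0 s) : f' t - f' 0 - C * t ≤ 0 := by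
    have := le_of_hasDerivAt_nonpos_on_Icc hd' (fun u hu ↦ sub_nonpos.2 (hC u hu)) ht
    simp only [mul_zero, sub_zero] at this
    linarith
  have := le_of_hasDerivAt_nonpos_on_Icc hd hd_nonpos ⟨hs, le_rfl⟩
  simp only [mul_zero, sub_zero, ne_eq, OfNat.ofNat_ne_zero, not_false_eq_true, zero_pow,
    zero_div] at this
  linarith

lemma div_sub_div_sq_le_sq_div_four {a₀ a₁ a₂ R : ℝ} (h₀ : 0 < a₀) (h : a₂ ≤ R * a₁) :
    a₂ / a₀ - (a₁ / a₀) ^ 2 ≤ R ^ 2 / 4 := by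
  have : a₂ / a₀ ≤ R * (a₁ / a₀) := by
    rw [← mul_div_assoc]
    exact div_le_div_of_nonneg_right h h₀.le
  nlinarith [sq_nonneg (a₁ / a₀ - R / 2)]

section ExpMoments

variable {Ω : Type*} [MeasurableSpace Ω] {P : Measure Ω} {X : Ω → ℝ}

lemma integral_mul_mul_integral_le_of_monotone {w : Ω → ℝ} {g : ℝ → ℝ} (hg : Monotone g)
    (hw : 0 ≤ᵐ[P] w) (hW : 0 < ∫ ω, w ω ∂P) (h₁ : Integrable w P)
    (h₂ : Integrable (fun ω ↦ w ω * X ω) P) (h₃ : Integrable (fun ω ↦ w ω * g (X ω)) P)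
    (h₄ : Integrable (fun ω ↦ w ω * X ω * g (X ω)) P) :
    (∫ ω, w ω * X ω ∂P) * (∫ ω, w ω * g (X ω) ∂P)
      ≤ (∫ ω, w ω ∂P) * ∫ ω, w ω * X ω * g (X ω) ∂P := by
  set c := (∫ ω, w ω * X ω ∂P) / ∫ ω, w ω ∂P
  have hcW : c * ∫ ω, w ω ∂P = ∫ ω, w ω * X ω ∂P := div_mul_cancel₀ _ hW.ne'
  -- at the weighted mean `c` of `X` the first-order term of the expansion below cancels
  have hmono (x : ℝ) : 0 ≤ (x - c) * (g x - g c) := by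
    rcases le_total x c with h | h
    · exact mul_nonneg_of_nonpos_of_nonpos (sub_nonpos.2 h) (sub_nonpos.2 (hg h))
    · exact mul_nonneg (sub_nonneg.2 h) (sub_nonneg.2 (hg h))
  have hnonneg : 0 ≤ ∫ ω, w ω * ((X ω - c) * (g (X ω) - g c)) ∂P :=
    integral_nonneg_of_ae <| by filter_upwards [hw] with ω hω using mul_nonneg hω (hmono _)
  have hexpand : ∫ ω, w ω * ((X ω - c) * (g (X ω) - g c)) ∂P
      = ∫ ω, w ω * X ω * g (X ω) ∂P - c * ∫ ω, w ω * g (X ω) ∂P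
        - g c * ∫ ω, w ω * X ω ∂P + c * g c * ∫ ω, w ω ∂P := by
    rw [← integral_const_mul, ← integral_const_mul, ← integral_const_mul, ← integral_sub,
      ← integral_sub, ← integral_add]
    · congr 1 with ω
      ring
    all_goals fun_prop
  rw [hexpand] at hnonneg
  have h : c * ∫ ω, w ω * g (X ω) ∂P ≤ ∫ ω, w ω * X ω * g (X ω) ∂P := by
    linear_combination hnonneg + g c * hcW
  calc (∫ ω, w ω * X ω ∂P) * (∫ ω, w ω * g (X ω) ∂P)
      = (∫ ω, w ω ∂P) * (c * ∫ ω, w ω * g (X ω) ∂P) := by rw [← hcW]; ring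
    _ ≤ (∫ ω, w ω ∂P) * ∫ ω, w ω * X ω * g (X ω) ∂P := mul_le_mul_of_nonneg_left h hW.le

noncomputable def expMoment (P : Measure Ω) (X : Ω → ℝ) (k : ℕ) (t : ℝ) : ℝ :=
  ∫ ω, X ω ^ k * exp (t * X ω) ∂P

lemma integrable_pow_mul_exp_of_forall (hint : ∀ t, Integrable (fun ω ↦ exp (t * X ω)) P)
    (k : ℕ) (t : ℝ) : Integrable (fun ω ↦ X ω ^ k * exp (t * X ω)) P :=
  integrable_pow_mul_exp_of_mem_interior_integrableExpSet (by simp [integrableExpSet, hint]) k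

lemma hasDerivAt_expMoment (hint : ∀ t, Integrable (fun ω ↦ exp (t * X ω)) P) (k : ℕ) (t : ℝ) :
    HasDerivAt (expMoment P X k) (expMoment P X (k + 1) t) t :=
  hasDerivAt_integral_pow_mul_exp_real (by simp [integrableExpSet, hint]) k

lemma expMoment_zero_pos [IsProbabilityMeasure P]
    (hint : ∀ t, Integrable (fun ω ↦ exp (t * X ω)) P) (t : ℝ) : 0 < expMoment P X 0 t := by
  simpa [expMoment, mgf] using mgf_pos (hint t)

lemma expMoment_one_pos (hint : ∀ t, Integrable (fun ω ↦ exp (t * X ω)) P)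
    (hX0 : ∀ᵐ ω ∂P, 0 ≤ X ω) (hpos : 0 < P {ω | 0 < X ω}) (t : ℝ) :
    0 < expMoment P X 1 t := by
  have hnonneg : 0 ≤ᵐ[P] fun ω ↦ X ω ^ 1 * exp (t * X ω) := by
    filter_upwards [hX0] with ω hω using by positivity
  rw [expMoment, integral_pos_iff_support_of_nonneg_ae hnonneg
    (integrable_pow_mul_exp_of_forall hint 1 t)]
  exact hpos.trans_le (measure_mono fun ω (hω : 0 < X ω) ↦ by simp [hω.ne', exp_ne_zero])

lemma expMoment_two_mul_le (hint : ∀ t, Integrable (fun ω ↦ exp (t * X ω)) P)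
    (hX0 : ∀ᵐ ω ∂P, 0 ≤ X ω) {t s : ℝ} (ht : 0 < expMoment P X 1 t) (hts : t ≤ s) :
    expMoment P X 2 t * expMoment P X 1 s ≤ expMoment P X 1 t * expMoment P X 2 s := by
  have h₂ : (fun ω ↦ X ω ^ 1 * exp (t * X ω) * X ω) = fun ω ↦ X ω ^ 2 * exp (t * X ω) := by
    funext ω
    ring
  have h₃ : (fun ω ↦ X ω ^ 1 * exp (t * X ω) * exp ((s - t) * X ω))
      = fun ω ↦ X ω ^ 1 * exp (s * X ω) := by
    funext ω
    rw [show s * X ω = t * X ω + (s - t) * X ω by ring, exp_add]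
    ring
  have h₄ : (fun ω ↦ X ω ^ 1 * exp (t * X ω) * X ω * exp ((s - t) * X ω))
      = fun ω ↦ X ω ^ 2 * exp (s * X ω) := by
    funext ω
    rw [show s * X ω = t * X ω + (s - t) * X ω by ring, exp_add]
    ring
  have key := integral_mul_mul_integral_le_of_monotone (P := P) (X := X)
    (w := fun ω ↦ X ω ^ 1 * exp (t * X ω)) (g := fun x ↦ exp ((s - t) * x))
    (fun x y hxy ↦ exp_le_exp.2 (by nlinarith))
    (by filter_upwards [hX0] with ω hω using by positivity) ht
    (integrable_pow_mul_exp_of_forall hint 1 t)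
    (by rw [h₂]; exact integrable_pow_mul_exp_of_forall hint 2 t)
    (by rw [h₃]; exact integrable_pow_mul_exp_of_forall hint 1 s)
    (by rw [h₄]; exact integrable_pow_mul_exp_of_forall hint 2 s)
  beta_reduce at key
  rwa [h₂, h₃, h₄] at key

lemma expMoment_two_le_mul_expMoment_one (hint : ∀ t, Integrable (fun ω ↦ exp (t * X ω)) P)
    (hX0 : ∀ᵐ ω ∂P, 0 ≤ X ω) (hpos : ∀ t, 0 < expMoment P X 1 t) {t s R : ℝ} (hts : t ≤ s)
    (hR : expMoment P X 2 s ≤ R * expMoment P X 1 s) :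
    expMoment P X 2 t ≤ R * expMoment P X 1 t := by
  have h := expMoment_two_mul_le hint hX0 (hpos t) hts
  refine le_of_mul_le_mul_right ?_ (hpos s)
  linarith [mul_le_mul_of_nonneg_left hR (hpos t).le]

lemma integral_exp_mul_sub_le_of_forall_le [IsProbabilityMeasure P]
    (hint : ∀ t, Integrable (fun ω ↦ exp (t * X ω)) P) {s C : ℝ} (hs : 0 ≤ s)
    (hC : ∀ t ∈ Set.Icc 0 s, expMoment P X 2 t / expMoment P X 0 t
      - (expMoment P X 1 t / expMoment P X 0 t) ^ 2 ≤ C) :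
    ∫ ω, exp (s * (X ω - ∫ ω', X ω' ∂P)) ∂P ≤ exp (C * s ^ 2 / 2) := by
  have hpos := expMoment_zero_pos hint
  have hlog := le_add_mul_add_of_second_deriv_le (f := fun t ↦ log (expMoment P X 0 t))
    (f' := fun t ↦ expMoment P X 1 t / expMoment P X 0 t) hs
    (fun t ↦ (hasDerivAt_expMoment hint 0 t).log (hpos t).ne')
    (fun t ↦ ((hasDerivAt_expMoment hint 1 t).div (hasDerivAt_expMoment hint 0 t)
      (hpos t).ne').congr_deriv (by field_simp)) hC
  have h₀ : expMoment P X 0 0 = 1 := by simp [expMoment]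
  have h₁ : expMoment P X 1 0 = ∫ ω, X ω ∂P := by simp [expMoment]
  simp only [h₀, h₁, log_one, div_one, zero_add] at hlog
  calc ∫ ω, exp (s * (X ω - ∫ ω', X ω' ∂P)) ∂P
      = expMoment P X 0 s * exp (-(s * ∫ ω, X ω ∂P)) := by
        rw [expMoment, ← integral_mul_const]
        congr 1 with ω
        rw [pow_zero, one_mul, ← exp_add, mul_sub, sub_eq_add_neg]
    _ ≤ exp ((∫ ω, X ω ∂P) * s + C * s ^ 2 / 2) * exp (-(s * ∫ ω, X ω ∂P)) := by
        gcongr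
        rwa [← exp_log (hpos s), exp_le_exp]
    _ = exp (C * s ^ 2 / 2) := by
        rw [← exp_add]
        ring_nf

lemma hasSum_expMoment [IsFiniteMeasure P] (hX : AEMeasurable X P) {b : ℝ}
    (hXb : ∀ᵐ ω ∂P, |X ω| ≤ b) (k : ℕ) (t : ℝ) :
    HasSum (fun j ↦ t ^ j / j.factorial * ∫ ω, X ω ^ (j + k) ∂P) (expMoment P X k t) := by
  have hpt (x : ℝ) :
      HasSum (fun j ↦ t ^ j / j.factorial * x ^ (j + k)) (x ^ k * exp (t * x)) := by
    have h : (fun j ↦ t ^ j / j.factorial * x ^ (j + k))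
        = fun j ↦ x ^ k * ((t * x) ^ j / j.factorial) := by
      funext j
      rw [mul_pow, pow_add]
      ring
    rw [h]
    exact (hasSum_pow_div_factorial (t * x)).mul_left (x ^ k)
  have hsum := hasSum_integral_of_dominated_convergence
    (fun j _ ↦ |t| ^ j / j.factorial * b ^ (j + k))
    (fun j ↦ ((hX.pow_const _).const_mul _).aestronglyMeasurable)
    (fun j ↦ by
      filter_upwards [hXb] with ω hω
      simp only [norm_mul, norm_div, norm_pow, Real.norm_eq_abs, Nat.abs_cast]
      gcongr)
    (ae_of_all _ fun _ ↦ summable_pow_div_factorial_mul_pow _ _ _) (integrable_const _)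
    (ae_of_all _ fun ω ↦ hpt (X ω))
  simp only [integral_const_mul] at hsum
  exact hsum

lemma integral_pow_nonneg (hX0 : ∀ᵐ ω ∂P, 0 ≤ X ω) (i : ℕ) : 0 ≤ ∫ ω, X ω ^ i ∂P :=
  integral_nonneg_of_ae <| by filter_upwards [hX0] with ω hω using pow_nonneg hω i

lemma integral_pow_succ_le (hint : ∀ t, Integrable (fun ω ↦ exp (t * X ω)) P) {b : ℝ}
    (hXb : ∀ᵐ ω ∂P, X ω ∈ Set.Icc 0 b) (i : ℕ) :
    ∫ ω, X ω ^ (i + 1) ∂P ≤ b * ∫ ω, X ω ^ i ∂P := by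
  have hi (n : ℕ) : Integrable (fun ω ↦ X ω ^ n) P := by
    simpa using integrable_pow_mul_exp_of_forall hint n 0
  rw [← integral_const_mul]
  refine integral_mono_ae (hi _) ((hi i).const_mul b) ?_
  filter_upwards [hXb] with ω hω
  rw [pow_succ, mul_comm]
  exact mul_le_mul_of_nonneg_right hω.2 (pow_nonneg hω.1 i)

end ExpMoments

theorem statement19 {Ω : Type*} [MeasurableSpace Ω] (P : Measure Ω) [IsProbabilityMeasure P]
    (p : ℕ) (hp : 1 ≤ p) (b : ℝ) (hb : 0 < b)
    (X : Ω → ℝ) (hX : Measurable X)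
    (hXb : P {ω | X ω ∈ Set.Icc 0 b} = 1)
    (hXpos : 0 < P {ω | 0 < X ω})
    (s : ℝ) (hs : 0 ≤ s) :
    (∫ ω, Real.exp (s * (X ω - ∫ ω', X ω' ∂P)) ∂P) ≤
      Real.exp (s ^ 2 * b ^ 2 * Cp p (s * b) b (fun k => ∫ ω, (X ω) ^ k ∂P) / 8) := by
  have hae : ∀ᵐ ω ∂P, X ω ∈ Set.Icc 0 b := (mem_ae_iff_prob_eq_one (hX measurableSet_Icc)).2 hXb
  have hX0 : ∀ᵐ ω ∂P, 0 ≤ X ω := hae.mono fun ω h ↦ h.1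
  have hint (t : ℝ) : Integrable (fun ω ↦ exp (t * X ω)) P :=
    integrable_exp_mul_of_mem_Icc hX.aemeasurable hae
  set μ : ℕ → ℝ := fun k ↦ ∫ ω, X ω ^ k ∂P
  have hμ0 := integral_pow_nonneg hX0
  have hμb := integral_pow_succ_le hint hae
  have hegf (k : ℕ) (t : ℝ) : expMoment P X k t = egf t μ k :=
    (hasSum_expMoment hX.aemeasurable
      (hae.mono fun ω h ↦ abs_le.2 ⟨by linarith [h.1], h.2⟩) k t).tsum_eq.symm
  have hE1 := expMoment_one_pos hint hX0 hXpos
  have hext1 : 0 < egf s (extendGeom p b μ) 1 :=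
    (hegf 1 s ▸ hE1 s).trans_le (egf_le_egf_extendGeom p hb.le hs hμ0 hμb 1)
  have hR : expMoment P X 2 s
      ≤ egf s (extendGeom p b μ) 2 / egf s (extendGeom p b μ) 1 * expMoment P X 1 s := by
    rw [div_mul_eq_mul_div, le_div_iff₀ hext1, hegf, hegf, mul_comm _ (egf s μ 1)]
    exact egf_two_mul_egf_extendGeom_le p hb.le hs hμ0 hμb
  rw [Cp_eq_sq_egf_div hp s hb.ne']
  convert integral_exp_mul_sub_le_of_forall_le hint hs fun t ht ↦
    div_sub_div_sq_le_sq_div_four (expMoment_zero_pos hint t)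
      (expMoment_two_le_mul_expMoment_one hint hX0 hE1 ht.2 hR) using 2
  field_simp
  ring
end
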